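/- Let (X,m) be an H-space and f : A → X a map. If F : A × X → X is any m-associative f-action, then F is homotopic to Ac^f_m = m ∘ (f × id). In other words, there is at most one m-associative f-action up to homotopy, namely m ∘ (f × id). -/

import Mathlib

open ContinuousMap

def incl₁ {A X : Type*} [TopologicalSpace A] [TopologicalSpace X] (x₀ : X) : C(A, A × X) :=
  (ContinuousMap.id A).prodMk (ContinuousMap.const A x₀)

def incl₂ {A X : Type*} [TopologicalSpace A] [TopologicalSpace X] (a₀ : A) : C(X, A × X) :=
  (ContinuousMap.const X a₀).prodMk (ContinuousMap.id X)

def IsAction {A X : Type*} [TopologicalSpace A] [TopologicalSpace X] (a₀ : A) (x₀ : X)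
    (F : C(A × X, X)) (f : C(A, X)) : Prop :=
  (F.comp (incl₂ a₀)).HomotopicRel (ContinuousMap.id X) {x₀} ∧
  (F.comp (incl₁ x₀)).HomotopicRel f {a₀}

def IsHMul {X : Type*} [TopologicalSpace X] (x₀ : X) (m : C(X × X, X)) : Prop :=
  (m.comp (incl₁ x₀)).HomotopicRel (ContinuousMap.id X) {x₀} ∧
  (m.comp (incl₂ x₀)).HomotopicRel (ContinuousMap.id X) {x₀}

def IsMAssociative {A X : Type*} [TopologicalSpace A] [TopologicalSpace X] (a₀ : A) (x₀ : X)
    (m : C(X × X, X)) (F : C(A × X, X)) : Prop :=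
  ContinuousMap.HomotopicRel
    ⟨fun p : A × X × X => m (F (p.1, p.2.1), p.2.2), by fun_prop⟩
    ⟨fun p : A × X × X => F (p.1, m p.2), by fun_prop⟩
    {(a₀, x₀, x₀)}

/-- Any `m`-associative `f`-action on an H-space `(X,m)` is based-homotopic to
`Ac^f_m = m ∘ (f × id)`. -/
theorem m_associative_action_unique {A X : Type*} [TopologicalSpace A] [TopologicalSpace X]
    (a₀ : A) (x₀ : X) (m : C(X × X, X)) (hm : IsHMul x₀ m)
    (f : C(A, X)) (hf : f a₀ = x₀)
    (F : C(A × X, X)) (hF : IsAction a₀ x₀ F f) (hassoc : IsMAssociative a₀ x₀ m F) :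
    F.HomotopicRel (m.comp (f.prodMap (ContinuousMap.id X))) {(a₀, x₀)} := by
  obtain ⟨H1⟩ := hm.2
  obtain ⟨H2⟩ := hF.2
  obtain ⟨H3⟩ := hassoc
  set G1 : C(A × X, X) := ⟨fun p => F (p.1, m (x₀, p.2)), by fun_prop⟩ with hG1
  set G2 : C(A × X, X) := ⟨fun p => m (F (p.1, x₀), p.2), by fun_prop⟩ with hG2
  have K1 : ContinuousMap.HomotopyRel G1 F {(a₀, x₀)} :=
    { toFun := fun q => F (q.2.1, H1 (q.1, q.2.2))
      continuous_toFun := by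
        apply F.continuous.comp
        exact (continuous_fst.comp continuous_snd).prodMk
          (H1.continuous.comp (continuous_fst.prodMk (continuous_snd.comp continuous_snd)))
      map_zero_left := fun p => by simp [hG1, incl₂]; exact congrArg (fun y => F (p.1, y)) (H1.apply_zero p.2)
      map_one_left := fun p => by simp
      prop' := by
        rintro t p rfl
        show F (a₀, H1 (t, x₀)) = G1 (a₀, x₀)
        rw [H1.eq_fst t (Set.mem_singleton x₀)]
        simp [hG1, incl₂] }
  have K3 : ContinuousMap.HomotopyRel G2 G1 {(a₀, x₀)} :=
    { toFun := fun q => H3 (q.1, (q.2.1, x₀, q.2.2))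
      continuous_toFun := by
        exact H3.continuous.comp (continuous_fst.prodMk
          ((continuous_fst.comp continuous_snd).prodMk
            (continuous_const.prodMk (continuous_snd.comp continuous_snd))))
      map_zero_left := fun p => by simp [hG2]
      map_one_left := fun p => by simp [hG1]
      prop' := by
        rintro t p rfl
        show H3 (t, (a₀, x₀, x₀)) = G2 (a₀, x₀)
        rw [H3.eq_fst t (Set.mem_singleton _)]
        simp [hG2] }
  have K2 : ContinuousMap.HomotopyRel G2 (m.comp (f.prodMap (ContinuousMap.id X))) {(a₀, x₀)} :=
    { toFun := fun q => m (H2 (q.1, q.2.1), q.2.2)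
      continuous_toFun := by
        apply m.continuous.comp
        exact (H2.continuous.comp (continuous_fst.prodMk
          (continuous_fst.comp continuous_snd))).prodMk (continuous_snd.comp continuous_snd)
      map_zero_left := fun p => by simp [hG2, incl₁]; exact congrArg (fun y => m (y, p.2)) (H2.apply_zero p.1)
      map_one_left := fun p => by simp [Prod.map]
      prop' := by
        rintro t p rfl
        show m (H2 (t, a₀), x₀) = G2 (a₀, x₀)
        rw [H2.eq_fst t (Set.mem_singleton a₀)]
        simp [hG2, incl₁] }
  exact HomotopicRel.trans (HomotopicRel.symm ⟨K1⟩) (HomotopicRel.trans (HomotopicRel.symm ⟨K3⟩) ⟨K2⟩)
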